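/- arXiv:2110.04367 — 3 statements merged into one kernel-verified Lean document; each statement's English description precedes it below -/
import Mathlib

section
/- For x, y ∈ ℝ^d and ω ~ N(0, I_d), E[exp(-‖x‖²/2) exp(ω^⊤ x) · exp(-‖y‖²/2) exp(ω^⊤ y)] = exp(x^⊤ y). -/
/-! The product of the two features is `exp (-(‖x‖² + ‖y‖²) / 2) * exp (ω ⬝ (x + y))`, and the
Gaussian moment generating function `𝔼 exp (ω ⬝ t) = exp (‖t‖² / 2)` at `t = x + y` turns the
constant into `exp ((‖x + y‖² - ‖x‖² - ‖y‖²) / 2) = exp (x ⬝ y)`. -/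

open MeasureTheory ProbabilityTheory

noncomputable def stdGaussian (d : ℕ) : Measure (Fin d → ℝ) :=
  Measure.pi fun _ => gaussianReal 0 1

def dotR {d : ℕ} (u v : Fin d → ℝ) : ℝ := ∑ i, u i * v i

lemma dotR_add_right {d : ℕ} (u v w : Fin d → ℝ) : dotR u (v + w) = dotR u v + dotR u w := by
  simp only [dotR, Pi.add_apply, mul_add, Finset.sum_add_distrib]

lemma integral_exp_dotR_stdGaussian (d : ℕ) (t : Fin d → ℝ) :
    ∫ ω, Real.exp (dotR ω t) ∂ stdGaussian d = Real.exp ((∑ i, t i ^ 2) / 2) := by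
  have hprod : ∀ ω : Fin d → ℝ, Real.exp (dotR ω t) = ∏ i, Real.exp (t i * ω i) := fun ω => by
    simp only [dotR, Real.exp_sum, mul_comm]
  have hmgf : ∀ s : ℝ, ∫ z, Real.exp (s * z) ∂ gaussianReal 0 1 = Real.exp (s ^ 2 / 2) :=
    fun s => by simpa [mgf] using congrFun (mgf_id_gaussianReal (μ := 0) (v := 1)) s
  simp_rw [hprod]
  rw [_root_.stdGaussian, integral_fintype_prod_eq_prod (fun i z => Real.exp (t i * z))]
  simp only [hmgf, ← Real.exp_sum, Finset.sum_div]

theorem stmt2 (d : ℕ) (x y : Fin d → ℝ) :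
    (∫ ω, (Real.exp (-(∑ i, x i ^ 2) / 2) * Real.exp (dotR ω x)) *
          (Real.exp (-(∑ i, y i ^ 2) / 2) * Real.exp (dotR ω y)) ∂ stdGaussian d)
      = Real.exp (dotR x y) := by
  have hsplit : ∀ ω : Fin d → ℝ,
      (Real.exp (-(∑ i, x i ^ 2) / 2) * Real.exp (dotR ω x)) *
          (Real.exp (-(∑ i, y i ^ 2) / 2) * Real.exp (dotR ω y))
        = Real.exp (-(∑ i, x i ^ 2) / 2 - (∑ i, y i ^ 2) / 2) * Real.exp (dotR ω (x + y)) :=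
    fun ω => by
      simp only [dotR_add_right, ← Real.exp_add]
      ring_nf
  simp_rw [hsplit]
  rw [integral_const_mul, integral_exp_dotR_stdGaussian, ← Real.exp_add, dotR]
  congr 1
  simp only [Pi.add_apply, add_sq, Finset.sum_add_distrib, ← Finset.mul_sum, mul_assoc]
  ring
end

section
/- For x, y ∈ ℝ^d and ω ~ N(0, I_d), E[exp(ω^⊤(x+y)) cos(ω^⊤(x-y))] = exp(2 x^⊤ y) cos(‖x‖² - ‖y‖²). -/
open MeasureTheory ProbabilityTheory

/-!
Write `exp (ω·(x+y)) cos (ω·(x-y))` as the real part of `exp (∑ cᵢ ωᵢ)` with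
`cᵢ = (xᵢ + yᵢ) + (xᵢ - yᵢ) i`. The coordinates of `ω` are independent standard Gaussians, so the
expectation factors into one-dimensional complex moment generating functions `exp (cᵢ² / 2)`,
and `∑ cᵢ² / 2 = 2 x·y + (‖x‖² - ‖y‖²) i`.
-/

open Complex

lemma integrable_cexp_mul_gaussianReal (μ : ℝ) (v : NNReal) (z : ℂ) :
    Integrable (fun t : ℝ => cexp (z * t)) (gaussianReal μ v) :=
  integrable_cexp_mul_of_re_mem_integrableExpSet (X := id) aemeasurable_id (by simp)

section PiGaussian

variable {ι : Type*} [Fintype ι] (m : ι → ℝ) (v : ι → NNReal) (c : ι → ℂ)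

lemma integrable_cexp_sum_mul_pi_gaussianReal :
    Integrable (fun ω : ι → ℝ => cexp (∑ i, c i * ω i))
      (Measure.pi fun i => gaussianReal (m i) (v i)) := by
  simp_rw [exp_sum]
  exact Integrable.fintype_prod fun i => integrable_cexp_mul_gaussianReal (m i) (v i) (c i)

lemma integral_cexp_sum_mul_pi_gaussianReal :
    ∫ ω, cexp (∑ i, c i * ω i) ∂(Measure.pi fun i => gaussianReal (m i) (v i))
      = cexp (∑ i, (c i * m i + v i * c i ^ 2 / 2)) := by
  simp_rw [exp_sum]
  rw [integral_fintype_prod_eq_prod (fun i (t : ℝ) => cexp (c i * t))]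
  exact Finset.prod_congr rfl fun i _ => complexMGF_id_gaussianReal (c i)

end PiGaussian

theorem stmt5 (d : ℕ) (x y : Fin d → ℝ) :
    (∫ ω, Real.exp (dotR ω (x + y)) * Real.cos (dotR ω (x - y)) ∂ stdGaussian d)
      = Real.exp (2 * dotR x y) * Real.cos ((∑ i, x i ^ 2) - (∑ i, y i ^ 2)) := by
  set c : Fin d → ℂ := fun i => ⟨x i + y i, x i - y i⟩
  have h_integrand (ω : Fin d → ℝ) :
      Real.exp (dotR ω (x + y)) * Real.cos (dotR ω (x - y)) = (cexp (∑ i, c i * ω i)).re := by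
    simp [exp_re, re_sum, im_sum, dotR, c, mul_comm]
  have h_moment : ∑ i, c i ^ 2 / 2 = ⟨2 * dotR x y, (∑ i, x i ^ 2) - (∑ i, y i ^ 2)⟩ := by
    apply Complex.ext <;>
      simp [re_sum, im_sum, dotR, c, pow_two, Finset.mul_sum,
        ← Finset.sum_sub_distrib] <;>
      exact Finset.sum_congr rfl fun i _ => by ring
  simp_rw [h_integrand, ← RCLike.re_to_complex]
  rw [_root_.stdGaussian, integral_re (integrable_cexp_sum_mul_pi_gaussianReal _ _ c),
    integral_cexp_sum_mul_pi_gaussianReal]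
  simp only [ofReal_zero, mul_zero, NNReal.coe_one, ofReal_one, one_mul, zero_add]
  rw [h_moment, RCLike.re_to_complex, exp_re]
end

section
/- Let ω₁,...,ω_m be i.i.d. N(0, I_d) and SM^trig_m(x,y) = exp((‖x‖²+‖y‖²)/2) · (1/m) Σᵢ cos(ωᵢ^⊤(x-y)). Then MSE(SM^trig_m(x,y)) = (1/(2m)) exp(‖x+y‖²) exp(-2 x^⊤ y) (1 - exp(-‖x-y‖²))². -/
open MeasureTheory ProbabilityTheory

/-! The estimator is `c` times the sample mean of the i.i.d. variables `cos ⟪ωᵢ, x - y⟫`, where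
`c = exp ((‖x‖² + ‖y‖²) / 2)`. The Gaussian characteristic function gives
`E cos ⟪ω, a⟫ = exp (-‖a‖² / 2)`, so `c · E cos ⟪ω, x - y⟫ = exp ⟪x, y⟫`: the estimator is unbiased
and its mean squared error is its variance `c² Var[cos ⟪ω, x - y⟫] / m`. Doubling the angle gives
`E cos² ⟪ω, a⟫ = (1 + exp (-2‖a‖²)) / 2`, hence `Var[cos ⟪ω, a⟫] = (1 - exp (-‖a‖²))² / 2`, and
finally `c² = exp ‖x + y‖² · exp (-2⟪x, y⟫)`. -/

section GaussianCos

variable {ι : Type*} [Fintype ι]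

lemma memLp_cos_sum_mul {μ : Measure (ι → ℝ)} [IsFiniteMeasure μ] (a : ι → ℝ) (p : ENNReal) :
    MemLp (fun w => Real.cos (∑ i, w i * a i)) p μ :=
  MemLp.of_bound (by fun_prop : Continuous _).aestronglyMeasurable 1
    (.of_forall fun _ => by simpa using Real.abs_cos_le_one _)

open Complex in
lemma integral_cexp_sum_mul_pi_gaussianReal_s8 (a : ι → ℝ) :
    ∫ w, cexp ((∑ i, w i * a i : ℝ) * I) ∂Measure.pi (fun _ : ι => gaussianReal 0 1)
      = Real.exp (-(∑ i, a i ^ 2) / 2) := by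
  have hprod (w : ι → ℝ) : cexp ((∑ i, w i * a i : ℝ) * I) = ∏ i, cexp (a i * w i * I) := by
    push_cast
    rw [Finset.sum_mul, ← exp_sum]
    exact congrArg cexp (Finset.sum_congr rfl fun _ _ => by ring)
  simp_rw [hprod]
  rw [integral_fintype_prod_eq_prod (fun i (x : ℝ) => cexp (a i * x * I))]
  simp_rw [← charFun_apply_real, charFun_gaussianReal, ← exp_sum]
  push_cast
  simp [Finset.sum_div, neg_div]

lemma integral_cos_sum_mul_pi_gaussianReal (a : ι → ℝ) :
    ∫ w, Real.cos (∑ i, w i * a i) ∂Measure.pi (fun _ : ι => gaussianReal 0 1)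
      = Real.exp (-(∑ i, a i ^ 2) / 2) := by
  have hint : Integrable (fun w : ι → ℝ => Complex.exp ((∑ i, w i * a i : ℝ) * Complex.I))
      (Measure.pi (fun _ : ι => gaussianReal 0 1)) :=
    Integrable.of_bound (by fun_prop : Continuous _).aestronglyMeasurable 1
      (.of_forall fun _ => (Complex.norm_exp_ofReal_mul_I _).le)
  simpa only [RCLike.re_to_complex, Complex.exp_ofReal_mul_I_re,
    integral_cexp_sum_mul_pi_gaussianReal_s8, Complex.ofReal_re] using integral_re hint

lemma integral_cos_sq_sum_mul_pi_gaussianReal (a : ι → ℝ) :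
    ∫ w, Real.cos (∑ i, w i * a i) ^ 2 ∂Measure.pi (fun _ : ι => gaussianReal 0 1)
      = (1 + Real.exp (-(2 * ∑ i, a i ^ 2))) / 2 := by
  have hdouble (w : ι → ℝ) : Real.cos (∑ i, w i * a i) ^ 2
      = (1 + Real.cos (∑ i, w i * (2 * a i))) / 2 := by
    rw [Real.cos_sq, show ∑ i, w i * (2 * a i) = 2 * ∑ i, w i * a i by
      rw [Finset.mul_sum]; exact Finset.sum_congr rfl fun _ _ => by ring]
    ring
  simp_rw [hdouble]
  rw [integral_div, integral_add (integrable_const _)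
      (memLp_one_iff_integrable.1 (memLp_cos_sum_mul _ 1)),
    integral_cos_sum_mul_pi_gaussianReal, integral_const]
  simp only [mul_pow, ← Finset.mul_sum, probReal_univ, one_smul]
  ring_nf

lemma variance_cos_sum_mul_pi_gaussianReal (a : ι → ℝ) :
    Var[fun w => Real.cos (∑ i, w i * a i); Measure.pi (fun _ : ι => gaussianReal 0 1)]
      = (1 - Real.exp (-∑ i, a i ^ 2)) ^ 2 / 2 := by
  set e := Real.exp (-(∑ i, a i ^ 2) / 2)
  have he2 : Real.exp (-∑ i, a i ^ 2) = e ^ 2 := by rw [← Real.exp_nat_mul]; ring_nf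
  have he4 : Real.exp (-(2 * ∑ i, a i ^ 2)) = e ^ 4 := by rw [← Real.exp_nat_mul]; ring_nf
  rw [variance_eq_sub (memLp_cos_sum_mul a 2)]
  simp only [Pi.pow_apply]
  rw [integral_cos_sq_sum_mul_pi_gaussianReal, integral_cos_sum_mul_pi_gaussianReal, he2, he4]
  ring

end GaussianCos

section SampleMean

variable {α : Type*} [MeasurableSpace α] {ν : Measure α} [IsProbabilityMeasure ν] {g : α → ℝ}
  {m : ℕ}

lemma integral_sampleMean_pi (hg : Integrable g ν) (hm : 0 < m) :
    ∫ W, (1 / (m : ℝ)) * ∑ i, g (W i) ∂Measure.pi (fun _ : Fin m => ν) = ∫ x, g x ∂ν := by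
  rw [integral_const_mul, integral_finsetSum _ fun i _ => integrable_comp_eval hg]
  simp_rw [integral_comp_eval (μ := fun _ => ν) hg.aestronglyMeasurable]
  simp only [Finset.sum_const, Finset.card_univ, Fintype.card_fin, nsmul_eq_mul]
  field_simp

lemma variance_sampleMean_pi (hg : MemLp g 2 ν) :
    Var[fun W => (1 / (m : ℝ)) * ∑ i, g (W i); Measure.pi (fun _ : Fin m => ν)]
      = Var[g; ν] / m := by
  rw [variance_const_mul, ← Finset.sum_fn, variance_sum_pi fun _ => hg]
  simp only [Finset.sum_const, Finset.card_univ, Fintype.card_fin, nsmul_eq_mul]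
  rcases m.eq_zero_or_pos with rfl | hm
  · simp
  · field_simp

lemma integral_sq_sub_const_mul_sampleMean_pi (hg : MemLp g 2 ν) (hm : 0 < m) (c : ℝ) :
    ∫ W, (c * ((1 / (m : ℝ)) * ∑ i, g (W i)) - c * ∫ x, g x ∂ν) ^ 2
        ∂Measure.pi (fun _ : Fin m => ν)
      = c ^ 2 * Var[g; ν] / m := by
  have hint : Integrable (fun W => c * ((1 / (m : ℝ)) * ∑ i, g (W i)))
      (Measure.pi (fun _ : Fin m => ν)) :=
    ((integrable_finsetSum _ fun i _ => integrable_comp_eval (hg.integrable one_le_two)).const_mul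
      _).const_mul c
  rw [← integral_sampleMean_pi (hg.integrable one_le_two) hm, ← integral_const_mul,
    ← variance_eq_integral hint.aemeasurable, variance_const_mul, variance_sampleMean_pi hg,
    mul_div_assoc]

end SampleMean

instance isProbabilityMeasure_stdGaussian (d : ℕ) : IsProbabilityMeasure (stdGaussian d) := by
  unfold _root_.stdGaussian; infer_instance

lemma sum_add_sq_eq_dotR {d : ℕ} (x y : Fin d → ℝ) :
    ∑ j, (x j + y j) ^ 2 = ∑ j, x j ^ 2 + 2 * dotR x y + ∑ j, y j ^ 2 := by
  simp only [dotR, Finset.mul_sum, ← Finset.sum_add_distrib]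
  exact Finset.sum_congr rfl fun _ _ => by ring

lemma sum_sub_sq_eq_dotR {d : ℕ} (x y : Fin d → ℝ) :
    ∑ j, (x j - y j) ^ 2 = ∑ j, x j ^ 2 - 2 * dotR x y + ∑ j, y j ^ 2 := by
  simp only [dotR, Finset.mul_sum, ← Finset.sum_sub_distrib, ← Finset.sum_add_distrib]
  exact Finset.sum_congr rfl fun _ _ => by ring

theorem stmt8 (d m : ℕ) (hm : 0 < m) (x y : Fin d → ℝ) :
    (∫ W : Fin m → Fin d → ℝ,
        (Real.exp (((∑ j, x j ^ 2) + (∑ j, y j ^ 2)) / 2) *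
            ((1 / (m : ℝ)) * ∑ i, Real.cos (dotR (W i) (x - y)))
          - Real.exp (dotR x y)) ^ 2
        ∂ Measure.pi (fun _ : Fin m => stdGaussian d))
      = (1 / (2 * m : ℝ)) * Real.exp (∑ j, (x j + y j) ^ 2) * Real.exp (-(2 * dotR x y)) *
          (1 - Real.exp (-(∑ j, (x j - y j) ^ 2))) ^ 2 := by
  set c := Real.exp (((∑ j, x j ^ 2) + (∑ j, y j ^ 2)) / 2)
  set g : (Fin d → ℝ) → ℝ := fun w => Real.cos (dotR w (x - y))
  have hg : MemLp g 2 (stdGaussian d) := memLp_cos_sum_mul (x - y) 2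
  have hmean : ∫ w, g w ∂stdGaussian d = Real.exp (-(∑ j, (x j - y j) ^ 2) / 2) :=
    integral_cos_sum_mul_pi_gaussianReal (x - y)
  have hvar : Var[g; stdGaussian d] = (1 - Real.exp (-∑ j, (x j - y j) ^ 2)) ^ 2 / 2 :=
    variance_cos_sum_mul_pi_gaussianReal (x - y)
  have hunbiased : Real.exp (dotR x y) = c * ∫ w, g w ∂stdGaussian d := by
    rw [hmean, ← Real.exp_add, sum_sub_sq_eq_dotR]
    ring_nf
  have hc : c ^ 2 = Real.exp (∑ j, (x j + y j) ^ 2) * Real.exp (-(2 * dotR x y)) := by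
    rw [← Real.exp_nat_mul, ← Real.exp_add, sum_add_sq_eq_dotR]
    ring_nf
  calc _ = c ^ 2 * Var[g; stdGaussian d] / m := by
        rw [hunbiased]
        exact integral_sq_sub_const_mul_sampleMean_pi hg hm c
    _ = _ := by
        rw [hvar, hc]
        field_simp
end
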